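/- Let G and H be nonzero formal power series in ℝ[[ρ,θ]] whose common vertices satisfy the non-vanishing condition for addition, and suppose ℘(Δ(H)) ⊆ ℘(Δ(G)). Then for every edge E of the Newton polygon of G, the E-polynomial of G+H equals the sum of the E-polynomials of G and H: (G+H)_E = G_E + H_E. If moreover N_H strictly lies above N_G (no valid index of H lies on N_G), then (G+H)_E = G_E for every edge E of N_G. -/

import Mathlib

open scoped Pointwise

/-- The coefficient of `ρ^i θ^j` in a formal power series in two variables over `ℝ`. -/
noncomputable def coef (F : MvPowerSeries (Fin 2) ℝ) (p : ℕ × ℕ) : ℝ :=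
  MvPowerSeries.coeff (Finsupp.single (0 : Fin 2) p.1 + Finsupp.single (1 : Fin 2) p.2) F

/-- The support (valid index set) `Δ(F)` of a power series. -/
noncomputable def suppSet (F : MvPowerSeries (Fin 2) ℝ) : Set (ℕ × ℕ) :=
  {p | coef F p ≠ 0}

/-- Embedding of lattice indices into `ℝ²`. -/
noncomputable def embed (p : ℕ × ℕ) : ℝ × ℝ := ((p.1 : ℝ), (p.2 : ℝ))

/-- The lower convex semi-hull `℘(S) = conv(S + ℝ≥0²)` of a set of lattice points. -/
noncomputable def lsh (S : Set (ℕ × ℕ)) : Set (ℝ × ℝ) :=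
  convexHull ℝ (embed '' S + {q : ℝ × ℝ | 0 ≤ q.1 ∧ 0 ≤ q.2})

/-- The vertex set `Δ^V(F)` of the Newton polygon. -/
noncomputable def vertexSet (F : MvPowerSeries (Fin 2) ℝ) : Set (ℕ × ℕ) :=
  {p | embed p ∈ (lsh (suppSet F)).extremePoints ℝ}

/-- The set `Λ^V(G\H)` of vanishing common vertices. -/
noncomputable def lamV (G H : MvPowerSeries (Fin 2) ℝ) : Set (ℕ × ℕ) :=
  {p | p ∈ vertexSet G ∧ p ∈ suppSet H ∧ coef G p + coef H p = 0}

/-- The linear functional `(u,v) ↦ u − v/ξ`. -/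
noncomputable def phiFun (ξ : ℝ) (q : ℝ × ℝ) : ℝ := q.1 - q.2 / ξ

/-- The `ξ`-component `σ(F,ξ)` of the Newton polygon: the face of `℘(Δ(F))` on which
the functional `(u,v) ↦ u − v/ξ` attains its minimum. -/
noncomputable def component (F : MvPowerSeries (Fin 2) ℝ) (ξ : ℝ) : Set (ℝ × ℝ) :=
  {p | p ∈ lsh (suppSet F) ∧ ∀ q ∈ lsh (suppSet F), phiFun ξ p ≤ phiFun ξ q}

/-- `E` is an edge of the Newton polygon of `F`: a non-degenerate `ξ`-component
for some negative slope `ξ`. -/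
def IsEdge (F : MvPowerSeries (Fin 2) ℝ) (E : Set (ℝ × ℝ)) : Prop :=
  ∃ ξ : ℝ, ξ < 0 ∧ E = component F ξ ∧ ¬ E.Subsingleton

/-- The Newton polygon of `F` (compact part of the boundary of `℘(Δ(F))`),
realized as the union of all `ξ`-components with `ξ < 0`. -/
noncomputable def newtonSet (F : MvPowerSeries (Fin 2) ℝ) : Set (ℝ × ℝ) :=
  ⋃ ξ ∈ Set.Iio (0 : ℝ), component F ξ

/-- The `E`-polynomial `F_E(θ) = Σ_{(i,j) ∈ E ∩ Δ(F)} a_{i,j} θ^j`. -/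
noncomputable def edgePoly (F : MvPowerSeries (Fin 2) ℝ) (E : Set (ℝ × ℝ)) : Polynomial ℝ :=
  ∑ᶠ p ∈ {p : ℕ × ℕ | p ∈ suppSet F ∧ embed p ∈ E},
    Polynomial.C (coef F p) * Polynomial.X ^ p.2

/-!
An edge `σ(G, ξ)` lies on a level line of `(u, v) ↦ u - v/ξ` with `ξ < 0`, which meets `ℕ²` in
finitely many points. Every `E`-polynomial is therefore a finite sum over these points (terms off
the support vanish), and coefficients are additive. If `N_H` strictly lies above `N_G`, `H`
contributes no term at all.
-/

lemma coef_add (G H : MvPowerSeries (Fin 2) ℝ) (p : ℕ × ℕ) :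
    coef (G + H) p = coef G p + coef H p := by
  simp [coef]

lemma support_coef_mul_X_pow (F : MvPowerSeries (Fin 2) ℝ) :
    Function.support (fun p : ℕ × ℕ => Polynomial.C (coef F p) * Polynomial.X ^ p.2)
      = suppSet F := by
  ext p
  simp [suppSet, Polynomial.X_ne_zero]

lemma edgePoly_eq_finsum_embed_mem (F : MvPowerSeries (Fin 2) ℝ) (E : Set (ℝ × ℝ)) :
    edgePoly F E = ∑ᶠ p ∈ {p : ℕ × ℕ | embed p ∈ E},
      Polynomial.C (coef F p) * Polynomial.X ^ p.2 := by
  rw [edgePoly, ← finsum_mem_inter_support _ {p | embed p ∈ E}, support_coef_mul_X_pow,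
    Set.inter_comm]
  rfl

lemma edgePoly_add_of_finite (G H : MvPowerSeries (Fin 2) ℝ) {E : Set (ℝ × ℝ)}
    (hE : {p : ℕ × ℕ | embed p ∈ E}.Finite) :
    edgePoly (G + H) E = edgePoly G E + edgePoly H E := by
  simp only [edgePoly_eq_finsum_embed_mem, ← finsum_mem_add_distrib hE, coef_add, map_add,
    add_mul]

lemma edgePoly_eq_zero_of_forall_notMem (F : MvPowerSeries (Fin 2) ℝ) {E : Set (ℝ × ℝ)}
    (h : ∀ p ∈ suppSet F, embed p ∉ E) : edgePoly F E = 0 := by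
  rw [edgePoly, Set.eq_empty_of_forall_notMem (s := {p | p ∈ suppSet F ∧ embed p ∈ E})
    fun p hp => h p hp.1 hp.2, finsum_mem_empty]

lemma finite_setOf_phiFun_embed_eq {ξ : ℝ} (hξ : ξ < 0) (c : ℝ) :
    {p : ℕ × ℕ | phiFun ξ (embed p) = c}.Finite := by
  refine ((Set.finite_Iic ⌊c⌋₊).prod (Set.finite_Iic ⌊-ξ * c⌋₊)).subset fun p hpc => ?_
  have hp : (p.1 : ℝ) - p.2 / ξ = c := hpc
  have hv : (p.2 : ℝ) = (p.1 - c) * ξ := (div_eq_iff hξ.ne).mp (by linarith)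
  have hu : (p.1 : ℝ) ≤ c := by
    by_contra! h
    nlinarith [(p.2.cast_nonneg : (0 : ℝ) ≤ p.2)]
  refine ⟨Nat.le_floor hu, Nat.le_floor ?_⟩
  nlinarith [(p.1.cast_nonneg : (0 : ℝ) ≤ p.1)]

lemma phiFun_eq_of_mem_component {F : MvPowerSeries (Fin 2) ℝ} {ξ : ℝ} {q e : ℝ × ℝ}
    (hq : q ∈ component F ξ) (he : e ∈ component F ξ) : phiFun ξ q = phiFun ξ e :=
  le_antisymm (hq.2 e he.1) (he.2 q hq.1)

lemma finite_setOf_embed_mem_component (F : MvPowerSeries (Fin 2) ℝ) {ξ : ℝ} (hξ : ξ < 0) :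
    {p : ℕ × ℕ | embed p ∈ component F ξ}.Finite := by
  rcases (component F ξ).eq_empty_or_nonempty with hempty | ⟨e, he⟩
  · simp [hempty]
  · exact (finite_setOf_phiFun_embed_eq hξ (phiFun ξ e)).subset fun p hp =>
      phiFun_eq_of_mem_component hp he

theorem edgePoly_add_general (G H : MvPowerSeries (Fin 2) ℝ) :
    (∀ E : Set (ℝ × ℝ), IsEdge G E →
        edgePoly (G + H) E = edgePoly G E + edgePoly H E) ∧
    ((embed '' suppSet H) ∩ newtonSet G = ∅ →
      ∀ E : Set (ℝ × ℝ), IsEdge G E → edgePoly (G + H) E = edgePoly G E) := by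
  have hadd : ∀ E, IsEdge G E → edgePoly (G + H) E = edgePoly G E + edgePoly H E := by
    rintro _ ⟨ξ, hξ, rfl, -⟩
    exact edgePoly_add_of_finite G H (finite_setOf_embed_mem_component G hξ)
  refine ⟨hadd, fun hdisj E hE => ?_⟩
  have hH : edgePoly H E = 0 := by
    obtain ⟨ξ, hξ, rfl, -⟩ := hE
    exact edgePoly_eq_zero_of_forall_notMem H fun p hp hpE =>
      (Set.eq_empty_iff_forall_notMem.mp hdisj) (embed p)
        ⟨⟨p, hp, rfl⟩, Set.mem_biUnion hξ hpE⟩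
  rw [hadd E hE, hH, add_zero]

/-- if common vertices are non-vanishing and `N_H` lies above `N_G`,
then `(G+H)_E = G_E + H_E` for every edge `E` of `N_G`; if moreover `N_H` strictly
lies above `N_G` (no valid index of `H` lies on `N_G`), then `(G+H)_E = G_E`. -/
theorem edgePoly_add (G H : MvPowerSeries (Fin 2) ℝ) (hG : G ≠ 0) (hH : H ≠ 0)
    (hnv : lamV G H ∩ lamV H G = ∅)
    (habove : lsh (suppSet H) ⊆ lsh (suppSet G)) :
    (∀ E : Set (ℝ × ℝ), IsEdge G E →
        edgePoly (G + H) E = edgePoly G E + edgePoly H E) ∧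
    ((embed '' suppSet H) ∩ newtonSet G = ∅ →
      ∀ E : Set (ℝ × ℝ), IsEdge G E → edgePoly (G + H) E = edgePoly G E) :=
  edgePoly_add_general G H
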